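/- arXiv:1710.08190 — 2 statements merged into one kernel-verified Lean document; each statement's English description precedes it below -/
import Mathlib

section
/- There exists a metric space (X,d) whose underlying topological space is a Cantor space and a point p ∈ X such that: (X,d) is doubling, uniformly disconnected, and not uniformly perfect (i.e., has type (1,1,0)); the set S_UP(X,d) of points of X having no uniformly perfect neighborhood equals {p}; and for every ρ ∈ (0,1] there exists r ∈ (0, diam X) with B(p,r) \ U(p, ρr) = ∅, where B is the closed and U the open ball. -/
open Metric Set
open scoped ENNReal NNReal

noncomputable section

/-- A metric space is doubling if there is `N` such that every closed ball of radius `r`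
can be covered by at most `N` closed balls of radius `r / 2`. -/
def IsDoubling (X : Type*) [MetricSpace X] : Prop :=
  ∃ N : ℕ, ∀ (x : X) (r : ℝ), ∃ c : Finset X, c.card ≤ N ∧
    Metric.closedBall x r ⊆ ⋃ y ∈ c, Metric.closedBall y (r / 2)

/-- Every `δ`-chain is trivial (constant). -/
def IsUniformlyDisconnectedWith (X : Type*) [MetricSpace X] (δ : ℝ) : Prop :=
  ∀ (N : ℕ) (x : ℕ → X),
    (∀ i : ℕ, 1 ≤ i → i ≤ N → dist (x (i - 1)) (x i) ≤ δ * dist (x 0) (x N)) →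
    ∀ i ≤ N, x i = x 0

def IsUniformlyDisconnected (X : Type*) [MetricSpace X] : Prop :=
  ∃ δ : ℝ, 0 < δ ∧ δ < 1 ∧ IsUniformlyDisconnectedWith X δ

/-- `ρ`-uniform perfectness. -/
def IsUniformlyPerfectWith (X : Type*) [MetricSpace X] (ρ : ℝ) : Prop :=
  ∀ (x : X) (r : ℝ), 0 < r → r < Metric.diam (Set.univ : Set X) →
    (Metric.closedBall x r \ Metric.ball x (ρ * r)).Nonempty

def IsUniformlyPerfect (X : Type*) [MetricSpace X] : Prop :=
  ∃ ρ : ℝ, 0 < ρ ∧ ρ ≤ 1 ∧ IsUniformlyPerfectWith X ρ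

/-- A metric space has type `(u, v, w) ∈ {0,1}³` (here encoded by `Bool`s) if `u = 1` exactly
when it is doubling, `v = 1` exactly when it is uniformly disconnected, and `w = 1` exactly
when it is uniformly perfect. -/
def HasType (X : Type*) [MetricSpace X] (u v w : Bool) : Prop :=
  (IsDoubling X ↔ u = true) ∧ (IsUniformlyDisconnected X ↔ v = true) ∧
    (IsUniformlyPerfect X ↔ w = true)

/-- `S_D`: points having no doubling neighborhood. -/
def SD (X : Type*) [MetricSpace X] : Set X :=
  {x : X | ∀ s ∈ nhds x, ¬ IsDoubling ↥s}

/-- `S_UD`: points having no uniformly disconnected neighborhood. -/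
def SUD (X : Type*) [MetricSpace X] : Set X :=
  {x : X | ∀ s ∈ nhds x, ¬ IsUniformlyDisconnected ↥s}

/-- `S_UP`: points having no uniformly perfect neighborhood. -/
def SUP (X : Type*) [MetricSpace X] : Set X :=
  {x : X | ∀ s ∈ nhds x, ¬ IsUniformlyPerfect ↥s}

/-- The ternary correspondence map `T(x) = Σ_{i≥1} 2 x_i / 3^i` (indices shifted to start
at `0`). -/
def cantorT (x : ℕ → Bool) : ℝ :=
  ∑' i : ℕ, 2 * (if x i then (1 : ℝ) else 0) / 3 ^ (i + 1)

/-- A Cantor space: a topological space homeomorphic to the middle-third Cantor set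
(`cantorSet` is Mathlib's middle-third Cantor set in `ℝ`). -/
def IsCantorSpace (X : Type*) [TopologicalSpace X] : Prop :=
  Nonempty (X ≃ₜ ↥cantorSet)

/-- The first index at which `x` and `y` differ. -/
def seqV (x y : ℕ → Bool) : ℕ := sInf {n | x n ≠ y n}

-- The standard ultrametric `e(x,y) = 3^{-(v(x,y)+1)}` on `2^ℕ` (indices starting at `0`,
-- corresponding to `3^{-min{n ≥ 1 : x_n ≠ y_n}}` with indices starting at `1`).
open Classical in
def cantorE (x y : ℕ → Bool) : ℝ :=
  if x = y then 0 else (3 : ℝ)⁻¹ ^ (seqV x y + 1)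

/-- A shrinking sequence: positive, non-increasing, converging to `0`. -/
def IsShrinking (α : ℕ → ℝ) : Prop :=
  (∀ n, 0 < α n) ∧ (∀ m n : ℕ, m ≤ n → α n ≤ α m) ∧
    Filter.Tendsto α Filter.atTop (nhds 0)

-- The distance `d_α(x,y) = α (v(x,y))` associated with a sequence `α`.
open Classical in
def seqDist (α : ℕ → ℝ) (x y : ℕ → Bool) : ℝ :=
  if x = y then 0 else α (seqV x y)

lemma seqV_comm (x y : ℕ → Bool) : seqV x y = seqV y x := by
  unfold seqV
  congr 1
  ext n
  exact ne_comm

lemma seqDist_self (α : ℕ → ℝ) (x : ℕ → Bool) : seqDist α x x = 0 := by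
  rw [seqDist, if_pos rfl]

lemma seqDist_of_ne (α : ℕ → ℝ) {x y : ℕ → Bool} (h : x ≠ y) :
    seqDist α x y = α (seqV x y) := by
  rw [seqDist, if_neg h]

lemma seqDist_nonneg {α : ℕ → ℝ} (hα : ∀ n, 0 < α n) (x y : ℕ → Bool) :
    0 ≤ seqDist α x y := by
  rcases eq_or_ne x y with h | h
  · rw [h, seqDist_self]
  · rw [seqDist_of_ne α h]
    exact (hα _).le

lemma min_seqV_le {x y z : ℕ → Bool} (hxz : x ≠ z) :
    min (seqV x y) (seqV y z) ≤ seqV x z := by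
  have hne : {n | x n ≠ z n}.Nonempty := by
    rcases Function.ne_iff.mp hxz with ⟨n, hn⟩
    exact ⟨n, hn⟩
  have hmem : x (seqV x z) ≠ z (seqV x z) := Nat.sInf_mem hne
  rcases ne_or_eq (x (seqV x z)) (y (seqV x z)) with h | h
  · exact le_trans (min_le_left _ _) (Nat.sInf_le h)
  · have h' : y (seqV x z) ≠ z (seqV x z) := by rw [← h]; exact hmem
    exact le_trans (min_le_right _ _) (Nat.sInf_le h')

/-- The sequentially metrized Cantor space `(2^ℕ, d_α)` for a shrinking sequence `α`. -/
def seqMetricSpace (α : ℕ → ℝ) (hα : IsShrinking α) : MetricSpace (ℕ → Bool) where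
  dist := seqDist α
  dist_self x := seqDist_self α x
  dist_comm x y := by
    show seqDist α x y = seqDist α y x
    rcases eq_or_ne x y with h | h
    · rw [h]
    · rw [seqDist_of_ne α h, seqDist_of_ne α h.symm, seqV_comm]
  dist_triangle x y z := by
    show seqDist α x z ≤ seqDist α x y + seqDist α y z
    rcases eq_or_ne x z with hxz | hxz
    · rw [hxz, seqDist_self]
      exact add_nonneg (seqDist_nonneg hα.1 _ _) (seqDist_nonneg hα.1 _ _)
    rcases eq_or_ne x y with hxy | hxy
    · subst hxy
      rw [seqDist_self, zero_add]
    rcases eq_or_ne y z with hyz | hyz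
    · subst hyz
      rw [seqDist_self, add_zero]
    rw [seqDist_of_ne α hxz, seqDist_of_ne α hxy, seqDist_of_ne α hyz]
    have h1 : α (seqV x z) ≤ α (min (seqV x y) (seqV y z)) :=
      hα.2.1 _ _ (min_seqV_le hxz)
    rcases min_cases (seqV x y) (seqV y z) with ⟨he, _⟩ | ⟨he, _⟩
    · rw [he] at h1
      exact h1.trans (le_add_of_nonneg_right (hα.1 _).le)
    · rw [he] at h1
      exact h1.trans (le_add_of_nonneg_left (hα.1 _).le)
  eq_of_dist_eq_zero := by
    intro x y h
    by_contra hne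
    have h' : seqDist α x y = 0 := h
    rw [seqDist_of_ne α hne] at h'
    exact absurd h' (ne_of_gt (hα.1 _))

/-- The Assouad dimension of a metric space. -/
def assouadDim (X : Type*) [MetricSpace X] : ℝ≥0∞ :=
  sInf {d : ℝ≥0∞ | ∃ s : ℝ, 0 < s ∧ d = ENNReal.ofReal s ∧ ∃ K : ℝ, 0 < K ∧
    ∀ ε : ℝ, 0 < ε → ε < 2 → ∀ r : ℝ, 0 < r → ∀ x : X,
      ∃ c : Finset X, (c.card : ℝ) ≤ K * ε ^ (-s) ∧
        Metric.closedBall x r ⊆ ⋃ y ∈ c, Metric.closedBall y (ε * r)}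

/-- The Hausdorff dimension of (the whole of) a metric space. -/
def hausdorffDim (X : Type*) [MetricSpace X] : ℝ≥0∞ := dimH (Set.univ : Set X)

/-- The topology induced by a metric. -/
def metricTopology {X : Type*} (m : MetricSpace X) : TopologicalSpace X :=
  m.toPseudoMetricSpace.toUniformSpace.toTopologicalSpace

/-- `f : X → Y` is quasi-symmetric: for some self-homeomorphism `η` of `[0,∞)`,
`d(f x, f y)/d(f x, f z) ≤ η (d(x,y)/d(x,z))` for all distinct `x, y, z`. -/
def IsQuasiSymmetric {X Y : Type*} [MetricSpace X] [MetricSpace Y] (f : X → Y) : Prop :=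
  ∃ η : Homeomorph (Set.Ici (0 : ℝ)) (Set.Ici (0 : ℝ)),
    ∀ x y z : X, x ≠ y → x ≠ z → y ≠ z →
      dist (f x) (f y) / dist (f x) (f z) ≤
        (η ⟨dist x y / dist x z, div_nonneg dist_nonneg dist_nonneg⟩ : ℝ)

/-- Two metric spaces (given by explicit metric structures) are quasi-symmetrically
equivalent if there is a quasi-symmetric homeomorphism between them. -/
def QSEquiv (X Y : Type*) (mX : MetricSpace X) (mY : MetricSpace Y) : Prop :=
  ∃ f : @Homeomorph X Y (metricTopology mX) (metricTopology mY),
    @IsQuasiSymmetric X Y mX mY f.toEquiv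


/-- The `ℓ^∞`-product metric (the sup metric) on `X × Y`. -/
def prodMetric {X Y : Type*} (mX : MetricSpace X) (mY : MetricSpace Y) :
    MetricSpace (X × Y) :=
  letI := mX; letI := mY; Prod.metricSpaceMax


/-!
The space is `X = {0} ∪ ⋃ₙ (tₙ + sₙ C) ⊂ ℝ` with `tₙ = 4^(-n²)`, `sₙ = tₙ / 4` and `C` the
middle-third Cantor set: a sequence of ever smaller affine copies of `C` accumulating at `0`.
Whenever the pieces are separated and tend to `0`, such a cluster is the one-point
compactification of `ℕ × C`; so is `C` itself (with pieces `(2 + C) / 3ⁿ⁺¹`), hence `X` is a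
Cantor space. Like every subset of `ℝ`, `X` is doubling; every pair `a < b` of its points is
separated by a gap of length at least `(b - a) / 3` (inside a piece, or between two pieces),
which makes `X` uniformly disconnected. Each piece is an open, uniformly perfect subset of `X`.
But `t_{n+1} / tₙ = 4^(-(2n+1)) → 0`, so for every `ρ` there are arbitrarily small `r` with
`B(0, r) \ U(0, ρ r)` empty, and no neighbourhood of `0` is uniformly perfect.
-/

open Filter Topology

section CantorSet

instance : CompactSpace cantorSet := isCompact_iff_compactSpace.mp isCompact_cantorSet

lemma div_three_mem_cantorSet {x : ℝ} (hx : x ∈ cantorSet) : x / 3 ∈ cantorSet := by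
  rw [cantorSet_eq_union_halves]
  exact Or.inl ⟨x, hx, rfl⟩

lemma two_add_div_three_mem_cantorSet {x : ℝ} (hx : x ∈ cantorSet) :
    (2 + x) / 3 ∈ cantorSet := by
  rw [cantorSet_eq_union_halves]
  exact Or.inr ⟨x, hx, rfl⟩

lemma mem_cantorSet_cases {x : ℝ} (hx : x ∈ cantorSet) :
    (∃ y ∈ cantorSet, x = y / 3) ∨ ∃ y ∈ cantorSet, x = (2 + y) / 3 := by
  rw [cantorSet_eq_union_halves] at hx
  rcases hx with ⟨y, hy, rfl⟩ | ⟨y, hy, rfl⟩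
  exacts [Or.inl ⟨y, hy, rfl⟩, Or.inr ⟨y, hy, rfl⟩]

lemma one_mem_cantorSet : (1 : ℝ) ∈ cantorSet :=
  mem_iInter.mpr fun n => by
    induction n with
    | zero => simp
    | succ n ih => exact Or.inr ⟨1, ih, by norm_num⟩

lemma le_or_le_of_mem_cantorSet {x : ℝ} (hx : x ∈ cantorSet) : x ≤ 1 / 3 ∨ 2 / 3 ≤ x := by
  rcases mem_cantorSet_cases hx with ⟨y, hy, rfl⟩ | ⟨y, hy, rfl⟩
  · left; linarith [(cantorSet_subset_unitInterval hy).2]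
  · right; linarith [(cantorSet_subset_unitInterval hy).1]

lemma exists_mem_cantorSet_abs_sub_mem_Icc (n : ℕ) {x : ℝ} (hx : x ∈ cantorSet) :
    ∃ y ∈ cantorSet, |x - y| ∈ Icc (1 / 3 ^ (n + 1)) (1 / 3 ^ n) := by
  induction n generalizing x with
  | zero =>
    obtain ⟨hx0, hx1⟩ := cantorSet_subset_unitInterval hx
    rcases le_or_le_of_mem_cantorSet hx with h | h
    · refine ⟨1, one_mem_cantorSet, ?_⟩
      rw [abs_sub_comm, abs_of_nonneg (by linarith)]
      constructor <;> norm_num <;> linarith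
    · refine ⟨0, zero_mem_cantorSet, ?_⟩
      rw [sub_zero, abs_of_nonneg hx0]
      constructor <;> norm_num <;> linarith
  | succ n ih =>
    have shrink : ∀ {a b : ℝ}, |a - b| ∈ Icc (1 / 3 ^ (n + 1)) (1 / 3 ^ n) →
        |a - b| / 3 ∈ Icc (1 / 3 ^ (n + 2)) (1 / 3 ^ (n + 1)) := fun ⟨h₁, h₂⟩ =>
      ⟨by rw [pow_succ _ (n + 1), ← div_div]; gcongr, by rw [pow_succ _ n, ← div_div]; gcongr⟩
    rcases mem_cantorSet_cases hx with ⟨y, hy, rfl⟩ | ⟨y, hy, rfl⟩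
    · obtain ⟨z, hz, hyz⟩ := ih hy
      refine ⟨z / 3, div_three_mem_cantorSet hz, ?_⟩
      rw [← sub_div, abs_div, abs_of_pos (three_pos : (0 : ℝ) < 3)]
      exact shrink hyz
    · obtain ⟨z, hz, hyz⟩ := ih hy
      refine ⟨(2 + z) / 3, two_add_div_three_mem_cantorSet hz, ?_⟩
      rw [← sub_div, add_sub_add_left_eq_sub, abs_div, abs_of_pos (three_pos : (0 : ℝ) < 3)]
      exact shrink hyz

lemma disjoint_cantorSet_Ioo_third : Disjoint cantorSet (Ioo (1 / 3 : ℝ) (2 / 3)) :=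
  disjoint_left.2 fun _ hz ⟨h₁, h₂⟩ => by
    rcases le_or_le_of_mem_cantorSet hz with h | h <;> linarith

lemma exists_gap_of_mem_cantorSet {a b : ℝ} (ha : a ∈ cantorSet) (hb : b ∈ cantorSet)
    (hab : a < b) :
    ∃ u v, a ≤ u ∧ v ≤ b ∧ (b - a) / 3 ≤ v - u ∧ Disjoint cantorSet (Ioo u v) := by
  obtain ⟨n, hn⟩ := pow_unbounded_of_one_lt (1 / (b - a)) (by norm_num : (1 : ℝ) < 3)
  rw [div_lt_iff₀ (sub_pos.2 hab)] at hn
  induction n generalizing a b with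
  | zero =>
    linarith [(cantorSet_subset_unitInterval ha).1, (cantorSet_subset_unitInterval hb).2]
  | succ n ih =>
    rcases mem_cantorSet_cases ha with ⟨a, ha', rfl⟩ | ⟨a, ha', rfl⟩ <;>
      rcases mem_cantorSet_cases hb with ⟨b, hb', rfl⟩ | ⟨b, hb', rfl⟩
    · obtain ⟨u, v, hau, hvb, hlen, hgap⟩ :=
        ih ha' hb' (by linarith) (by convert hn using 1; ring)
      refine ⟨u / 3, v / 3, by linarith, by linarith, by linarith, disjoint_left.2 ?_⟩
      rintro z hz ⟨hz₁, hz₂⟩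
      rcases mem_cantorSet_cases hz with ⟨z, hz', rfl⟩ | ⟨z, hz', rfl⟩
      · exact disjoint_left.1 hgap hz' ⟨by linarith, by linarith⟩
      · linarith [(cantorSet_subset_unitInterval hb').2, (cantorSet_subset_unitInterval hz').1]
    · refine ⟨1 / 3, 2 / 3, ?_, ?_, ?_, disjoint_cantorSet_Ioo_third⟩ <;>
        linarith [(cantorSet_subset_unitInterval ha').2, (cantorSet_subset_unitInterval hb').1,
          (cantorSet_subset_unitInterval ha').1, (cantorSet_subset_unitInterval hb').2]
    · linarith [(cantorSet_subset_unitInterval ha').1, (cantorSet_subset_unitInterval hb').2]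
    · obtain ⟨u, v, hau, hvb, hlen, hgap⟩ :=
        ih ha' hb' (by linarith) (by convert hn using 1; ring)
      refine ⟨(2 + u) / 3, (2 + v) / 3, by linarith, by linarith, by linarith,
        disjoint_left.2 ?_⟩
      rintro z hz ⟨hz₁, hz₂⟩
      rcases mem_cantorSet_cases hz with ⟨z, hz', rfl⟩ | ⟨z, hz', rfl⟩
      · linarith [(cantorSet_subset_unitInterval ha').1, (cantorSet_subset_unitInterval hz').2]
      · exact disjoint_left.1 hgap hz' ⟨by linarith, by linarith⟩

end CantorSet

section CantorCluster

def cantorPiece (t s : ℕ → ℝ) (p : ℕ × cantorSet) : ℝ := t p.1 + s p.1 * p.2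

def cantorCluster (t s : ℕ → ℝ) : Set ℝ := insert 0 (range (cantorPiece t s))

def cantorClusterParam (t s : ℕ → ℝ) (p : OnePoint (ℕ × cantorSet)) : ℝ :=
  p.elim 0 (cantorPiece t s)

structure ClusterScales (t s : ℕ → ℝ) : Prop where
  scale_pos : ∀ n, 0 < s n
  gap : ∀ n, t (n + 1) + s (n + 1) < t n
  tendsto : Tendsto t atTop (𝓝 0)

lemma continuous_cantorPiece (t s : ℕ → ℝ) : Continuous (cantorPiece t s) :=
  continuous_prod_of_discrete_left.2 fun _ => by
    unfold cantorPiece; fun_prop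

lemma range_cantorClusterParam (t s : ℕ → ℝ) :
    range (cantorClusterParam t s) = cantorCluster t s := by
  ext z
  constructor
  · rintro ⟨p, rfl⟩
    induction p using OnePoint.rec
    exacts [mem_insert _ _, mem_insert_of_mem _ (mem_range_self _)]
  · rintro (rfl | ⟨p, rfl⟩)
    exacts [⟨OnePoint.infty, rfl⟩, ⟨p, rfl⟩]

namespace ClusterScales

variable {t s : ℕ → ℝ}

lemma strictAnti (h : ClusterScales t s) : StrictAnti t :=
  strictAnti_nat_of_succ_lt fun n => by linarith [h.gap n, h.scale_pos (n + 1)]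

lemma pos (h : ClusterScales t s) (n : ℕ) : 0 < t n :=
  (h.strictAnti.antitone.le_of_tendsto h.tendsto (n + 1)).trans_lt (h.strictAnti n.lt_succ_self)

lemma add_strictAnti (h : ClusterScales t s) : StrictAnti fun n => t n + s n :=
  strictAnti_nat_of_succ_lt fun n => by linarith [h.gap n, h.scale_pos n]

lemma add_lt_of_lt (h : ClusterScales t s) {m n : ℕ} (hmn : m < n) : t n + s n < t m :=
  (h.add_strictAnti.antitone hmn).trans_lt (h.gap m)

lemma cantorPiece_mem_Icc (h : ClusterScales t s) (p : ℕ × cantorSet) :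
    cantorPiece t s p ∈ Icc (t p.1) (t p.1 + s p.1) := by
  obtain ⟨hc₀, hc₁⟩ := cantorSet_subset_unitInterval p.2.2
  have := h.scale_pos p.1
  constructor <;> unfold cantorPiece <;> nlinarith

lemma cantorPiece_pos (h : ClusterScales t s) (p : ℕ × cantorSet) : 0 < cantorPiece t s p :=
  (h.pos p.1).trans_le (h.cantorPiece_mem_Icc p).1

lemma fst_eq_of_cantorPiece_eq (h : ClusterScales t s) {p q : ℕ × cantorSet}
    (hpq : cantorPiece t s p = cantorPiece t s q) : p.1 = q.1 := by
  by_contra hne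
  have hp := h.cantorPiece_mem_Icc p
  have hq := h.cantorPiece_mem_Icc q
  rcases Nat.lt_or_gt_of_ne hne with hlt | hlt
  · linarith [h.add_lt_of_lt hlt, hp.1, hq.2]
  · linarith [h.add_lt_of_lt hlt, hp.2, hq.1]

lemma cantorPiece_injective (h : ClusterScales t s) : Function.Injective (cantorPiece t s) := by
  rintro ⟨m, c⟩ ⟨n, d⟩ hpq
  obtain rfl : m = n := h.fst_eq_of_cantorPiece_eq hpq
  have hc : (c : ℝ) = d := by
    simpa [cantorPiece, (h.scale_pos m).ne'] using hpq
  rw [Subtype.ext hc]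

lemma abs_cantorPiece_sub (h : ClusterScales t s) (n : ℕ) (c d : cantorSet) :
    |cantorPiece t s (n, c) - cantorPiece t s (n, d)| = s n * |(c : ℝ) - d| := by
  rw [cantorPiece, cantorPiece, add_sub_add_left_eq_sub, ← mul_sub, abs_mul,
    abs_of_pos (h.scale_pos n)]

lemma nonneg_of_mem_cantorCluster (h : ClusterScales t s) {z : ℝ} (hz : z ∈ cantorCluster t s) :
    0 ≤ z := by
  rcases hz with rfl | ⟨p, rfl⟩
  exacts [le_rfl, (h.cantorPiece_pos p).le]

lemma le_of_mem_cantorCluster_of_lt (h : ClusterScales t s) {z : ℝ}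
    (hz : z ∈ cantorCluster t s) {m : ℕ} (hzm : z < t m) : z ≤ t (m + 1) + s (m + 1) := by
  rcases hz with rfl | ⟨p, rfl⟩
  · linarith [h.pos (m + 1), h.scale_pos (m + 1)]
  have hp := h.cantorPiece_mem_Icc p
  have hmp : m < p.1 := by
    by_contra! hpm
    linarith [h.strictAnti.antitone hpm, hp.1]
  linarith [hp.2, h.add_strictAnti.antitone hmp]

lemma disjoint_cantorCluster_Ioo (h : ClusterScales t s) (n : ℕ) :
    Disjoint (cantorCluster t s) (Ioo (t (n + 1) + s (n + 1)) (t n)) :=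
  disjoint_left.2 fun _ hz hz' => (h.le_of_mem_cantorCluster_of_lt hz hz'.2).not_gt hz'.1

lemma continuous_cantorClusterParam (h : ClusterScales t s) :
    Continuous (cantorClusterParam t s) := by
  refine continuous_iff_continuousAt.2 fun p => ?_
  induction p using OnePoint.rec with
  | infty =>
    refine OnePoint.continuousAt_infty.2 fun V hV => ?_
    obtain ⟨ε, hε, hεV⟩ := Metric.mem_nhds_iff.1 hV
    obtain ⟨N, hN⟩ := (h.tendsto.eventually (gt_mem_nhds hε)).exists
    refine ⟨Iic N ×ˢ univ, (isClosed_discrete _).prod isClosed_univ,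
      (finite_Iic N).isCompact.prod isCompact_univ, fun p hp => hεV ?_⟩
    have hNp : N < p.1 := by simpa using hp
    have hp := h.cantorPiece_mem_Icc p
    change |cantorPiece t s p - 0| < ε
    rw [sub_zero, abs_of_pos (h.cantorPiece_pos p)]
    linarith [hp.2, h.add_lt_of_lt hNp]
  | coe p =>
    exact OnePoint.continuousAt_coe.2 (continuous_cantorPiece t s).continuousAt

lemma cantorClusterParam_injective (h : ClusterScales t s) :
    Function.Injective (cantorClusterParam t s) := by
  intro p q hpq
  induction p using OnePoint.rec <;> induction q using OnePoint.rec
  · rfl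
  · exact absurd hpq (h.cantorPiece_pos _).ne
  · exact absurd hpq (h.cantorPiece_pos _).ne'
  · exact congrArg _ (h.cantorPiece_injective hpq)

def homeomorph (h : ClusterScales t s) :
    OnePoint (ℕ × cantorSet) ≃ₜ cantorCluster t s :=
  ((h.continuous_cantorClusterParam.isClosedEmbedding
    h.cantorClusterParam_injective).isEmbedding.toHomeomorph).trans
    (Homeomorph.setCongr (range_cantorClusterParam t s))

end ClusterScales

lemma clusterScales_ternary :
    ClusterScales (fun n => 2 / 3 ^ (n + 1)) (fun n => 1 / 3 ^ (n + 1)) where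
  scale_pos n := by positivity
  gap n := by
    rw [← add_div, div_lt_div_iff₀ (by positivity) (by positivity), pow_succ _ (n + 1)]
    nlinarith [pow_pos (three_pos : (0 : ℝ) < 3) (n + 1)]
  tendsto := tendsto_const_nhds.div_atTop
    ((tendsto_pow_atTop_atTop_of_one_lt (by norm_num)).comp (tendsto_add_atTop_nat 1))

lemma cantorCluster_ternary :
    cantorCluster (fun n => 2 / 3 ^ (n + 1)) (fun n => 1 / 3 ^ (n + 1)) = cantorSet := by
  have piece_mem : ∀ n, ∀ c ∈ cantorSet,
      2 / 3 ^ (n + 1) + 1 / 3 ^ (n + 1) * c ∈ cantorSet := by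
    intro n c hc
    induction n with
    | zero => convert two_add_div_three_mem_cantorSet hc using 1; ring
    | succ n ih => convert div_three_mem_cantorSet ih using 1; ring
  have mem_range : ∀ N : ℕ, ∀ x ∈ cantorSet, (1 / 3 : ℝ) ^ N < x →
      x ∈ range (cantorPiece (fun n => 2 / 3 ^ (n + 1)) (fun n => 1 / 3 ^ (n + 1))) := by
    intro N
    induction N with
    | zero => exact fun x hx h1 => absurd (cantorSet_subset_unitInterval hx).2 (by simpa using h1)
    | succ N ih =>
      intro x hx hNx
      rcases mem_cantorSet_cases hx with ⟨y, hy, rfl⟩ | ⟨y, hy, rfl⟩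
      · obtain ⟨⟨n, c⟩, hnc⟩ := ih y hy (by rw [pow_succ] at hNx; linarith)
        refine ⟨⟨n + 1, c⟩, ?_⟩
        simp only [cantorPiece] at hnc ⊢
        rw [← hnc]; ring
      · exact ⟨⟨0, ⟨y, hy⟩⟩, by simp only [cantorPiece]; ring⟩
  ext x
  constructor
  · rintro (rfl | ⟨⟨n, c, hc⟩, rfl⟩)
    exacts [zero_mem_cantorSet, piece_mem n c hc]
  · intro hx
    rcases (cantorSet_subset_unitInterval hx).1.eq_or_lt with rfl | hx0
    · exact mem_insert _ _
    obtain ⟨N, hN⟩ := exists_pow_lt_of_lt_one hx0 (by norm_num : (1 / 3 : ℝ) < 1)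
    exact mem_insert_of_mem _ (mem_range N x hx hN)

lemma ClusterScales.isCantorSpace {t s : ℕ → ℝ} (h : ClusterScales t s) :
    IsCantorSpace (cantorCluster t s) :=
  ⟨h.homeomorph.symm.trans <|
    clusterScales_ternary.homeomorph.trans (Homeomorph.setCongr cantorCluster_ternary)⟩

end CantorCluster

section MetricCriteria

lemma isDoubling_of_closedBall_subset_quarters {X : Type*} [MetricSpace X] {N : ℕ}
    (hX : ∀ (x : X) (r : ℝ), ∃ c : Finset X, c.card ≤ N ∧
      closedBall x r ⊆ ⋃ y ∈ c, closedBall y (r / 4))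
    (S : Set X) : IsDoubling S := by
  classical
  refine ⟨N, fun x r => ?_⟩
  obtain ⟨c, hcN, hcover⟩ := hX x r
  let pick : X → S := fun y => if hy : ∃ z : S, dist (z : X) y ≤ r / 4 then hy.choose else x
  refine ⟨c.image pick, Finset.card_image_le.trans hcN, fun z hz => ?_⟩
  obtain ⟨y, hyc, hzy⟩ := mem_iUnion₂.1 (hcover (by simpa [Subtype.dist_eq] using hz))
  have hy : ∃ w : S, dist (w : X) y ≤ r / 4 := ⟨z, hzy⟩
  have hpick : dist (pick y : X) y ≤ r / 4 := by
    simp only [pick, dif_pos hy]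
    exact hy.choose_spec
  refine mem_iUnion₂.2 ⟨pick y, Finset.mem_image_of_mem _ hyc, ?_⟩
  rw [mem_closedBall, Subtype.dist_eq]
  linarith [dist_triangle_right (z : X) (pick y) y, mem_closedBall.1 hzy]

lemma real_closedBall_subset_quarters (x r : ℝ) :
    closedBall x r ⊆
      ⋃ y ∈ ({x - 3 * r / 4, x - r / 4, x + r / 4, x + 3 * r / 4} : Finset ℝ),
        closedBall y (r / 4) := by
  intro z hz
  rw [mem_closedBall, Real.dist_eq, abs_le] at hz
  simp only [mem_iUnion, Finset.mem_insert, Finset.mem_singleton, mem_closedBall, Real.dist_eq,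
    abs_le, exists_prop, exists_eq_or_imp, exists_eq_left]
  by_cases h₁ : z ≤ x - r / 2
  · left; constructor <;> linarith
  by_cases h₂ : z ≤ x
  · right; left; constructor <;> linarith
  by_cases h₃ : z ≤ x + r / 2
  · right; right; left; constructor <;> linarith
  · right; right; right; constructor <;> linarith

lemma isDoubling_real_subset (S : Set ℝ) : IsDoubling S :=
  isDoubling_of_closedBall_subset_quarters
    (fun x r => ⟨_, Finset.card_le_four, real_closedBall_subset_quarters x r⟩) S

lemma Nat.exists_step_of_not {P : ℕ → Prop} {N : ℕ} (h0 : P 0) (hN : ¬ P N) :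
    ∃ i, 1 ≤ i ∧ i ≤ N ∧ P (i - 1) ∧ ¬ P i := by
  induction N with
  | zero => exact absurd h0 hN
  | succ N ih =>
    by_cases hPN : P N
    · exact ⟨N + 1, by omega, le_rfl, hPN, hN⟩
    · obtain ⟨i, hi₁, hiN, hi⟩ := ih hPN
      exact ⟨i, hi₁, by omega, hi⟩

lemma exists_dist_ge_of_disjoint_Ioo {S : Set ℝ} {u v : ℝ} (huv : u < v)
    (hgap : Disjoint S (Ioo u v)) {N : ℕ} (x : ℕ → S)
    (hx : (x 0 : ℝ) ≤ u ∧ v ≤ x N ∨ (x N : ℝ) ≤ u ∧ v ≤ x 0) :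
    ∃ i, 1 ≤ i ∧ i ≤ N ∧ v - u ≤ dist (x (i - 1)) (x i) := by
  have side : ∀ i, (x i : ℝ) ≤ u ∨ v ≤ x i := fun i => by
    by_contra! hi
    exact disjoint_left.1 hgap (x i).2 ⟨hi.1, hi.2⟩
  simp only [Subtype.dist_eq, Real.dist_eq]
  rcases hx with ⟨h0, hN⟩ | ⟨hN, h0⟩
  · obtain ⟨i, hi₁, hiN, hprev, hi⟩ :=
      Nat.exists_step_of_not (P := fun i => (x i : ℝ) ≤ u) (N := N) h0 (not_le.2 (by linarith))
    refine ⟨i, hi₁, hiN, ?_⟩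
    rw [abs_sub_comm]
    linarith [le_abs_self ((x i : ℝ) - x (i - 1)), (side i).resolve_left hi]
  · obtain ⟨i, hi₁, hiN, hprev, hi⟩ :=
      Nat.exists_step_of_not (P := fun i => v ≤ (x i : ℝ)) (N := N) h0 (not_le.2 (by linarith))
    refine ⟨i, hi₁, hiN, ?_⟩
    linarith [le_abs_self ((x (i - 1) : ℝ) - x i), (side i).resolve_right hi]

lemma isUniformlyDisconnectedWith_of_gaps {S : Set ℝ} {κ δ : ℝ} (hκ : 0 < κ) (hδ : δ < κ)
    (hgap : ∀ a ∈ S, ∀ b ∈ S, a < b →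
      ∃ u v, a ≤ u ∧ v ≤ b ∧ κ * (b - a) ≤ v - u ∧ Disjoint S (Ioo u v)) :
    IsUniformlyDisconnectedWith S δ := by
  intro N x hchain
  have hN : x N = x 0 := by
    by_contra hne
    have hD : 0 < dist (x 0) (x N) := dist_pos.2 (Ne.symm hne)
    obtain ⟨i, hi₁, hiN, hstep⟩ :
        ∃ i, 1 ≤ i ∧ i ≤ N ∧ κ * dist (x 0) (x N) ≤ dist (x (i - 1)) (x i) := by
      have hD' : dist (x 0) (x N) = |(x 0 : ℝ) - x N| := Subtype.dist_eq _ _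
      rcases lt_or_gt_of_ne (Subtype.coe_injective.ne (Ne.symm hne)) with hlt | hlt
      · obtain ⟨u, v, hu, hv, hlen, hdisj⟩ := hgap _ (x 0).2 _ (x N).2 hlt
        obtain ⟨i, hi₁, hiN, hi⟩ :=
          exists_dist_ge_of_disjoint_Ioo (by nlinarith) hdisj x (Or.inl ⟨hu, hv⟩)
        refine ⟨i, hi₁, hiN, le_trans ?_ hi⟩
        rwa [hD', abs_sub_comm, abs_of_pos (by linarith)]
      · obtain ⟨u, v, hu, hv, hlen, hdisj⟩ := hgap _ (x N).2 _ (x 0).2 hlt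
        obtain ⟨i, hi₁, hiN, hi⟩ :=
          exists_dist_ge_of_disjoint_Ioo (by nlinarith) hdisj x (Or.inr ⟨hu, hv⟩)
        refine ⟨i, hi₁, hiN, le_trans ?_ hi⟩
        rwa [hD', abs_of_pos (by linarith)]
    nlinarith [hchain i hi₁ hiN]
  intro i hi
  induction i with
  | zero => rfl
  | succ i ih =>
    have := hchain (i + 1) (by omega) hi
    rw [hN, dist_self, mul_zero, Nat.add_sub_cancel] at this
    rw [← dist_le_zero.1 this, ih (by omega)]

lemma isUniformlyPerfectWith_of_forall_exists_dist {X : Type*} [MetricSpace X] {σ : ℝ}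
    (hdiam : diam (univ : Set X) ≤ σ)
    (hscale : ∀ (x : X) (k : ℕ), ∃ y, dist x y ∈ Icc (σ / 3 ^ (k + 1)) (σ / 3 ^ k)) :
    IsUniformlyPerfectWith X (1 / 9) := by
  intro x r hr hrd
  obtain ⟨k, hk₁, hk₂⟩ := exists_nat_pow_near (x := σ / r)
    ((one_le_div hr).2 (hrd.le.trans hdiam)) (by norm_num : (1 : ℝ) < 3)
  rw [le_div_iff₀ hr] at hk₁
  rw [div_lt_iff₀ hr] at hk₂
  obtain ⟨y, hy₁, hy₂⟩ := hscale x (k + 1)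
  have h3 : (0 : ℝ) < 3 ^ (k + 1) := by positivity
  refine ⟨y, ?_, ?_⟩
  · rw [mem_closedBall, dist_comm]
    calc dist x y ≤ σ / 3 ^ (k + 1) := hy₂
      _ ≤ r := by rw [div_le_iff₀ h3]; linarith
  · rw [mem_ball, dist_comm, not_lt]
    calc 1 / 9 * r = 3 ^ k * r / 3 ^ (k + 2) := by field_simp; ring
      _ ≤ σ / 3 ^ (k + 1 + 1) := by gcongr
      _ ≤ dist x y := hy₁

end MetricCriteria

section PinchedCantor

def pieceStart (n : ℕ) : ℝ := 1 / 4 ^ n ^ 2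

def pieceWidth (n : ℕ) : ℝ := pieceStart n / 4

abbrev pinchedCantor : Set ℝ := cantorCluster pieceStart pieceWidth

lemma pieceStart_pos (n : ℕ) : 0 < pieceStart n := by unfold pieceStart; positivity

lemma pieceStart_succ (n : ℕ) : pieceStart (n + 1) = pieceStart n / 4 ^ (2 * n + 1) := by
  rw [pieceStart, pieceStart, div_div, ← pow_add]
  ring_nf

lemma pieceStart_succ_le (n : ℕ) : pieceStart (n + 1) ≤ pieceStart n / 4 := by
  rw [pieceStart_succ]
  gcongr
  · exact (pieceStart_pos n).le
  · exact le_self_pow₀ (by norm_num : (1 : ℝ) ≤ 4) (by omega : 2 * n + 1 ≠ 0)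

namespace pinchedCantor

lemma clusterScales : ClusterScales pieceStart pieceWidth where
  scale_pos n := div_pos (pieceStart_pos n) four_pos
  gap n := by
    unfold pieceWidth
    linarith [pieceStart_succ_le n, pieceStart_pos n]
  tendsto := tendsto_const_nhds.div_atTop
    ((tendsto_pow_atTop_atTop_of_one_lt (by norm_num)).comp (tendsto_pow_atTop two_ne_zero))

instance : CompactSpace pinchedCantor := clusterScales.homeomorph.compactSpace

lemma exists_ge_pieceStart_add_pieceWidth_succ_lt (ρ : ℝ) (hρ : 0 < ρ) (M : ℕ) :
    ∃ m, M ≤ m ∧ pieceStart (m + 1) + pieceWidth (m + 1) < ρ * pieceStart m := by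
  obtain ⟨k, hk⟩ := pow_unbounded_of_one_lt (5 / (4 * ρ)) (by norm_num : (1 : ℝ) < 4)
  refine ⟨max M k, le_max_left _ _, ?_⟩
  set m := max M k
  have hkm : (4 : ℝ) ^ k ≤ 4 ^ (2 * m + 1) := pow_le_pow_right₀ (by norm_num) (by omega)
  have h4 : (0 : ℝ) < 4 ^ (2 * m + 1) := by positivity
  rw [div_lt_iff₀ (by positivity)] at hk
  have ht := pieceStart_pos m
  have hsum : pieceStart (m + 1) + pieceWidth (m + 1) =
      5 * pieceStart m / (4 * 4 ^ (2 * m + 1)) := by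
    rw [pieceWidth, pieceStart_succ]; field_simp; ring
  rw [hsum, div_lt_iff₀ (by positivity)]
  nlinarith [mul_le_mul_of_nonneg_right hkm (mul_pos four_pos hρ).le]

def basePoint : pinchedCantor := ⟨0, mem_insert 0 _⟩

def piecePoint (p : ℕ × cantorSet) : pinchedCantor :=
  ⟨cantorPiece pieceStart pieceWidth p, mem_insert_of_mem _ (mem_range_self p)⟩

lemma dist_basePoint (z : pinchedCantor) : dist z basePoint = z := by
  rw [Subtype.dist_eq, Real.dist_eq, basePoint, sub_zero,
    abs_of_nonneg (clusterScales.nonneg_of_mem_cantorCluster z.2)]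

lemma dist_piecePoint_zero_basePoint (n : ℕ) :
    dist (piecePoint (n, ⟨0, zero_mem_cantorSet⟩)) basePoint = pieceStart n := by
  rw [dist_basePoint]
  simp [piecePoint, cantorPiece]

lemma closedBall_diff_ball_eq_empty {ρ : ℝ} (hρ : 0 < ρ) (M : ℕ) :
    ∃ m, M ≤ m ∧ closedBall basePoint (pieceStart m / 2) \
      ball basePoint (ρ * (pieceStart m / 2)) = ∅ := by
  obtain ⟨m, hMm, hm⟩ := exists_ge_pieceStart_add_pieceWidth_succ_lt (ρ / 2) (by positivity) M
  refine ⟨m, hMm, eq_empty_of_forall_notMem fun z ⟨hz, hz'⟩ => hz' ?_⟩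
  rw [mem_closedBall, dist_basePoint] at hz
  rw [mem_ball, dist_basePoint]
  have := clusterScales.le_of_mem_cantorCluster_of_lt z.2
    (hz.trans_lt (half_lt_self (pieceStart_pos m)))
  linarith

lemma fst_eq_of_mem_Ioo {p : ℕ × cantorSet} {n : ℕ}
    (hp : cantorPiece pieceStart pieceWidth p ∈
      Ioo (pieceStart (n + 1) + pieceWidth (n + 1)) (2 * pieceStart n)) : p.1 = n := by
  have hpI := clusterScales.cantorPiece_mem_Icc p
  rcases lt_trichotomy p.1 n with hlt | heq | hgt
  · have := pieceStart_succ_le p.1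
    have := clusterScales.strictAnti.antitone (Nat.succ_le_of_lt hlt)
    linarith [hp.2, hpI.1, pieceStart_pos p.1]
  · exact heq
  · linarith [hp.1, hpI.2, clusterScales.add_strictAnti.antitone (Nat.succ_le_of_lt hgt)]

def pieceNbhd (n : ℕ) : Set pinchedCantor :=
  {z | pieceStart (n + 1) + pieceWidth (n + 1) < z ∧ (z : ℝ) < 2 * pieceStart n}

lemma isOpen_pieceNbhd (n : ℕ) : IsOpen (pieceNbhd n) :=
  isOpen_Ioo.preimage continuous_subtype_val

lemma cantorPiece_mem_Ioo (n : ℕ) (c : cantorSet) :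
    cantorPiece pieceStart pieceWidth (n, c) ∈
      Ioo (pieceStart (n + 1) + pieceWidth (n + 1)) (2 * pieceStart n) := by
  have hI := clusterScales.cantorPiece_mem_Icc (n, c)
  have := clusterScales.gap n
  have := pieceStart_pos n
  constructor <;> simp only [pieceWidth] at * <;> linarith [hI.1, hI.2]

lemma exists_eq_cantorPiece_of_mem_pieceNbhd {n : ℕ} {z : pinchedCantor}
    (hz : z ∈ pieceNbhd n) : ∃ c, (z : ℝ) = cantorPiece pieceStart pieceWidth (n, c) := by
  rcases z with ⟨z, rfl | ⟨p, rfl⟩⟩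
  · exact absurd hz.1 (by linarith [pieceStart_pos (n + 1), clusterScales.scale_pos (n + 1)])
  · obtain rfl := fst_eq_of_mem_Ioo hz
    exact ⟨p.2, rfl⟩

lemma isUniformlyPerfectWith_pieceNbhd (n : ℕ) :
    IsUniformlyPerfectWith (pieceNbhd n) (1 / 9) := by
  have hs := clusterScales.scale_pos n
  refine isUniformlyPerfectWith_of_forall_exists_dist (σ := pieceWidth n) ?_ ?_
  · refine diam_le_of_forall_dist_le hs.le fun z _ w _ => ?_
    obtain ⟨c, hc⟩ := exists_eq_cantorPiece_of_mem_pieceNbhd z.2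
    obtain ⟨d, hd⟩ := exists_eq_cantorPiece_of_mem_pieceNbhd w.2
    rw [Subtype.dist_eq, Subtype.dist_eq, Real.dist_eq, hc, hd, clusterScales.abs_cantorPiece_sub]
    have := abs_sub_le_of_nonneg_of_le (cantorSet_subset_unitInterval c.2).1
      (cantorSet_subset_unitInterval c.2).2 (cantorSet_subset_unitInterval d.2).1
      (cantorSet_subset_unitInterval d.2).2
    nlinarith
  · intro z k
    obtain ⟨c, hc⟩ := exists_eq_cantorPiece_of_mem_pieceNbhd z.2
    obtain ⟨d, hd, hcd⟩ := exists_mem_cantorSet_abs_sub_mem_Icc k c.2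
    refine ⟨⟨piecePoint (n, ⟨d, hd⟩), cantorPiece_mem_Ioo n ⟨d, hd⟩⟩, ?_⟩
    rw [Subtype.dist_eq, Subtype.dist_eq, Real.dist_eq, hc]
    change |_ - cantorPiece pieceStart pieceWidth (n, ⟨d, hd⟩)| ∈ _
    rw [clusterScales.abs_cantorPiece_sub]
    simp only [div_eq_mul_one_div (pieceWidth n)]
    exact ⟨mul_le_mul_of_nonneg_left hcd.1 hs.le, mul_le_mul_of_nonneg_left hcd.2 hs.le⟩

lemma exists_gap {a b : ℝ} (ha : a ∈ pinchedCantor) (hb : b ∈ pinchedCantor) (hab : a < b) :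
    ∃ u v, a ≤ u ∧ v ≤ b ∧ 1 / 3 * (b - a) ≤ v - u ∧
      Disjoint pinchedCantor (Ioo u v) := by
  have ha₀ := clusterScales.nonneg_of_mem_cantorCluster ha
  obtain rfl | ⟨⟨n, c⟩, rfl⟩ := hb
  · linarith
  have hbI := clusterScales.cantorPiece_mem_Icc (n, c)
  have hbIoo := cantorPiece_mem_Ioo n c
  by_cases hlow : a ≤ pieceStart (n + 1) + pieceWidth (n + 1)
  · refine ⟨_, _, hlow, hbI.1, ?_, clusterScales.disjoint_cantorCluster_Ioo n⟩
    have := pieceStart_succ_le n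
    simp only [pieceWidth] at *
    linarith [hbI.2]
  obtain rfl | ⟨⟨m, d⟩, rfl⟩ := ha
  · linarith [pieceStart_pos (n + 1), clusterScales.scale_pos (n + 1)]
  obtain rfl : m = n := fst_eq_of_mem_Ioo ⟨not_le.1 hlow, hab.trans hbIoo.2⟩
  have hs := clusterScales.scale_pos m
  have hdc : (d : ℝ) < c := by
    simp only [cantorPiece] at hab
    nlinarith
  obtain ⟨u, v, hdu, hvc, hlen, hgap⟩ := exists_gap_of_mem_cantorSet d.2 c.2 hdc
  refine ⟨pieceStart m + pieceWidth m * u, pieceStart m + pieceWidth m * v, ?_, ?_, ?_, ?_⟩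
  · simp only [cantorPiece]; nlinarith
  · simp only [cantorPiece]; nlinarith
  · simp only [cantorPiece]; nlinarith
  refine disjoint_left.2 fun z hz ⟨hz₁, hz₂⟩ => ?_
  have hzm : z ∈ Ioo (pieceStart (m + 1) + pieceWidth (m + 1)) (2 * pieceStart m) := by
    simp only [cantorPiece] at hbIoo hlow
    constructor <;> nlinarith [hbIoo.2]
  obtain rfl | ⟨⟨k, e⟩, rfl⟩ := hz
  · linarith [pieceStart_pos (m + 1), clusterScales.scale_pos (m + 1), hzm.1]
  obtain rfl : k = m := fst_eq_of_mem_Ioo hzm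
  simp only [cantorPiece] at hz₁ hz₂
  exact disjoint_left.1 hgap e.2 ⟨by nlinarith, by nlinarith⟩

lemma isUniformlyDisconnectedWith : IsUniformlyDisconnectedWith pinchedCantor (1 / 4) :=
  isUniformlyDisconnectedWith_of_gaps (by norm_num) (by norm_num) fun _ ha _ hb hab =>
    exists_gap ha hb hab

lemma half_pieceStart_lt_diam (m : ℕ) : pieceStart m / 2 < diam (univ : Set pinchedCantor) := by
  calc pieceStart m / 2 < pieceStart 0 := by
        linarith [clusterScales.strictAnti.antitone m.zero_le, pieceStart_pos m]
    _ = dist (piecePoint (0, ⟨0, zero_mem_cantorSet⟩)) basePoint :=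
        (dist_piecePoint_zero_basePoint 0).symm
    _ ≤ _ := dist_le_diam_of_mem (Bornology.isBounded_univ.2 inferInstance) (mem_univ _)
        (mem_univ _)

lemma exists_closedBall_diff_ball_eq_empty {ρ : ℝ} (hρ : 0 < ρ) :
    ∃ r, 0 < r ∧ r < diam (univ : Set pinchedCantor) ∧
      closedBall basePoint r \ ball basePoint (ρ * r) = ∅ := by
  obtain ⟨m, -, hm⟩ := closedBall_diff_ball_eq_empty hρ 0
  exact ⟨_, half_pos (pieceStart_pos m), half_pieceStart_lt_diam m, hm⟩

lemma not_isUniformlyPerfect : ¬ IsUniformlyPerfect pinchedCantor := by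
  rintro ⟨ρ, hρ, -, hup⟩
  obtain ⟨r, hr, hrd, hempty⟩ := exists_closedBall_diff_ball_eq_empty hρ
  exact (hup basePoint r hr hrd).ne_empty hempty

lemma basePoint_mem_SUP : basePoint ∈ SUP pinchedCantor := by
  rintro V hV ⟨ρ, hρ, -, hup⟩
  obtain ⟨ε, hε, hεV⟩ := Metric.mem_nhds_iff.1 hV
  obtain ⟨k, hk⟩ := (clusterScales.tendsto.eventually (gt_mem_nhds hε)).exists
  let q := piecePoint (k, ⟨0, zero_mem_cantorSet⟩)
  have hq : dist q basePoint = pieceStart k := dist_piecePoint_zero_basePoint k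
  have hqV : q ∈ V := hεV (by rw [mem_ball, hq]; exact hk)
  let p : V := ⟨basePoint, mem_of_mem_nhds hV⟩
  obtain ⟨m, hkm, hempty⟩ := closedBall_diff_ball_eq_empty hρ k
  have hdiam : pieceStart m / 2 < diam (univ : Set V) :=
    calc pieceStart m / 2 < pieceStart k := by
          linarith [clusterScales.strictAnti.antitone hkm, pieceStart_pos m]
      _ = dist (⟨q, hqV⟩ : V) p := hq.symm
      _ ≤ _ := dist_le_diam_of_mem (Bornology.isBounded_univ.2 inferInstance) (mem_univ _)
        (mem_univ _)
  obtain ⟨z, hz, hz'⟩ := hup p _ (half_pos (pieceStart_pos m)) hdiam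
  exact hempty.subset ⟨hz, hz'⟩

lemma SUP_eq : SUP pinchedCantor = {basePoint} := by
  refine subset_antisymm (fun q hq => ?_) (singleton_subset_iff.2 basePoint_mem_SUP)
  obtain ⟨q, rfl | ⟨⟨n, c⟩, rfl⟩⟩ := q
  · rfl
  · exact absurd ⟨1 / 9, by norm_num, by norm_num, isUniformlyPerfectWith_pieceNbhd n⟩
      (hq _ ((isOpen_pieceNbhd n).mem_nhds (cantorPiece_mem_Ioo n c)))

lemma hasType : HasType pinchedCantor true true false :=
  ⟨iff_of_true (isDoubling_real_subset _) rfl,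
    iff_of_true ⟨1 / 4, by norm_num, by norm_num, isUniformlyDisconnectedWith⟩ rfl,
    iff_of_false not_isUniformlyPerfect Bool.false_ne_true⟩

end pinchedCantor

end PinchedCantor

theorem statement_13 :
    ∃ (X : Type) (m : MetricSpace X) (p : X),
      @IsCantorSpace X (metricTopology m) ∧
      @HasType X m true true false ∧
      @SUP X m = {p} ∧
      ∀ ρ : ℝ, 0 < ρ → ρ ≤ 1 →
        ∃ r : ℝ, 0 < r ∧ r < @Metric.diam X m.toPseudoMetricSpace Set.univ ∧
          @Metric.closedBall X m.toPseudoMetricSpace p r \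
            @Metric.ball X m.toPseudoMetricSpace p (ρ * r) = ∅ :=
  ⟨pinchedCantor, inferInstance, pinchedCantor.basePoint,
    pinchedCantor.clusterScales.isCantorSpace, pinchedCantor.hasType, pinchedCantor.SUP_eq,
    fun _ hρ _ => pinchedCantor.exists_closedBall_diff_ball_eq_empty hρ⟩

end
end

section
/- Let α : ℕ → (0,∞) be a shrinking sequence and let d_α be the associated ultrametric on 2^ℕ = (ℕ → {0,1}). Then (2^ℕ, d_α) is doubling if and only if there exists N ∈ ℕ such that for every k ∈ ℕ, the set {n ∈ ℕ : α(k)/2 ≤ α(n) ≤ α(k)} has at most N elements. -/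
open Metric Set
open scoped ENNReal NNReal

noncomputable section

/-!
For `r ≥ 0` the closed `d_α`-ball of radius `r` is the cylinder fixing the coordinates `n` with
`α n > r`. So a ball of radius `r` splits into exactly `2 ^ m` balls of radius `r / 2`, where
`m = #{n | r / 2 < α n ≤ r}`, and the space is doubling iff these counts are bounded. Bounding
them is equivalent to bounding the windows `{n | α k / 2 ≤ α n ≤ α k}`: each window is covered
by two half-open annuli, and an annulus with first index `k` lies in the window of `k`.
-/

open Function

lemma IsShrinking.antitone {α : ℕ → ℝ} (hα : IsShrinking α) : Antitone α :=
  fun m n hmn => hα.2.1 m n hmn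

lemma seqV_le {x y : ℕ → Bool} {n : ℕ} (h : x n ≠ y n) : seqV x y ≤ n :=
  Nat.sInf_le h

lemma apply_seqV_ne {x y : ℕ → Bool} (hxy : x ≠ y) : x (seqV x y) ≠ y (seqV x y) :=
  Nat.sInf_mem (ne_iff.mp hxy)

section SeqDist

variable {α : ℕ → ℝ}

lemma seqDist_le_iff (hanti : Antitone α) {r : ℝ} (hr : 0 ≤ r) {x y : ℕ → Bool} :
    seqDist α x y ≤ r ↔ ∀ n, r < α n → x n = y n := by
  rcases eq_or_ne x y with rfl | hxy
  · simp [seqDist_self, hr]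
  rw [seqDist_of_ne α hxy]
  constructor
  · intro h n hn
    by_contra hne
    exact ((hanti (seqV_le hne)).trans h).not_gt hn
  · intro h
    by_contra hlt
    exact apply_seqV_ne hxy (h _ (not_le.mp hlt))

lemma finite_preimage_Ioc_half (hlim : Filter.Tendsto α Filter.atTop (nhds 0)) (r : ℝ) :
    (α ⁻¹' Ioc (r / 2) r).Finite := by
  rcases le_or_gt r 0 with hr | hr
  · rw [Ioc_eq_empty (by linarith), preimage_empty]
    exact finite_empty
  · have hsmall : ∀ᶠ n in Filter.cofinite, α n < r / 2 := by
      rw [Nat.cofinite_eq_atTop]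
      exact hlim.eventually_lt_const (by linarith)
    exact (Filter.eventually_cofinite.mp hsmall).subset fun n hn => not_lt.mpr hn.1.le

lemma two_pow_ncard_le_card_of_cover (hα : IsShrinking α) {x : ℕ → Bool} {r : ℝ} (hr : 0 ≤ r)
    {c : Finset (ℕ → Bool)}
    (hc : {w | seqDist α w x ≤ r} ⊆ ⋃ y ∈ c, {w | seqDist α w y ≤ r / 2}) :
    2 ^ (α ⁻¹' Ioc (r / 2) r).ncard ≤ c.card := by
  set A := α ⁻¹' Ioc (r / 2) r
  have : Finite A := (finite_preimage_Ioc_half hα.2.2 r).to_subtype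
  have hball : ∀ s : A → Bool, seqDist α (extend Subtype.val s x) x ≤ r :=
    fun s => (seqDist_le_iff hα.antitone hr).mpr fun n hn =>
      extend_val_apply' fun hnA => hn.not_ge hnA.2
  have hcenter : ∀ s : A → Bool, ∃ y : c, seqDist α (extend Subtype.val s x) y ≤ r / 2 := by
    intro s
    obtain ⟨y, hy, hsy⟩ := mem_iUnion₂.mp (hc (hball s))
    exact ⟨⟨y, hy⟩, hsy⟩
  choose center hcenter using hcenter
  have hinj : Injective center := by
    intro s s' hss'
    funext ⟨n, hn⟩
    have hfix := fun t => (seqDist_le_iff hα.antitone (by linarith)).mp (hcenter t) n hn.1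
    simpa only [extend_val_apply hn] using
      (hfix s).trans ((congrArg (fun y : c => (y : ℕ → Bool) n) hss').trans (hfix s').symm)
  calc 2 ^ A.ncard = Nat.card (A → Bool) := by
        rw [Nat.card_fun, Nat.card_eq_fintype_card, Fintype.card_bool, Nat.card_coe_set_eq]
    _ ≤ Nat.card c := Nat.card_le_card_of_injective center hinj
    _ = c.card := Nat.card_eq_finsetCard c

lemma exists_cover_card_le_two_pow_ncard (hα : IsShrinking α) (x : ℕ → Bool) (r : ℝ) :
    ∃ c : Finset (ℕ → Bool), c.card ≤ 2 ^ (α ⁻¹' Ioc (r / 2) r).ncard ∧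
      {w | seqDist α w x ≤ r} ⊆ ⋃ y ∈ c, {w | seqDist α w y ≤ r / 2} := by
  set A := α ⁻¹' Ioc (r / 2) r
  have : Fintype A := (finite_preimage_Ioc_half hα.2.2 r).fintype
  classical
  refine ⟨Finset.univ.image fun s : A → Bool => extend Subtype.val s x, ?_, ?_⟩
  · calc _ ≤ Fintype.card (A → Bool) := Finset.card_image_le
      _ = 2 ^ A.ncard := by
        rw [Fintype.card_fun, Fintype.card_bool, ← Nat.card_eq_fintype_card,
          Nat.card_coe_set_eq]
  · intro w hw
    have hr : 0 ≤ r := (seqDist_nonneg hα.1 w x).trans hw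
    refine mem_iUnion₂.mpr ⟨_, Finset.mem_image_of_mem _ (Finset.mem_univ fun n : A => w n), ?_⟩
    refine (seqDist_le_iff hα.antitone (by linarith)).mpr fun n hn => ?_
    by_cases hnA : n ∈ A
    · rw [extend_val_apply hnA]
    · have hrn : r < α n := lt_of_not_ge fun h => hnA ⟨hn, h⟩
      rw [extend_val_apply' hnA]
      exact (seqDist_le_iff hα.antitone hr).mp hw n hrn

lemma isDoubling_seqMetricSpace_iff (hα : IsShrinking α) :
    @IsDoubling (ℕ → Bool) (seqMetricSpace α hα) ↔
      ∃ M : ℕ, ∀ r, (α ⁻¹' Ioc (r / 2) r).encard ≤ M := by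
  constructor
  · rintro ⟨N, hN⟩
    refine ⟨N, fun r => ?_⟩
    rcases lt_or_ge r 0 with hr | hr
    · simp [Ioc_eq_empty_of_le (by linarith : r ≤ r / 2)]
    obtain ⟨c, hcN, hcover⟩ := hN (fun _ => false) r
    have hpow := (two_pow_ncard_le_card_of_cover hα hr hcover).trans hcN
    rw [← (finite_preimage_Ioc_half hα.2.2 r).cast_ncard_eq, Nat.cast_le]
    exact (Nat.lt_two_pow_self.trans_le hpow).le
  · rintro ⟨M, hM⟩
    refine ⟨2 ^ M, fun x r => ?_⟩
    obtain ⟨c, hc, hcover⟩ := exists_cover_card_le_two_pow_ncard hα x r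
    refine ⟨c, hc.trans (Nat.pow_le_pow_right two_pos ?_), hcover⟩
    rw [← Nat.cast_le (α := ℕ∞), (finite_preimage_Ioc_half hα.2.2 r).cast_ncard_eq]
    exact hM r

end SeqDist

lemma exists_encard_Ioc_half_le_iff {α : ℕ → ℝ} (hanti : Antitone α) (hpos : ∀ n, 0 < α n) :
    (∃ M : ℕ, ∀ r, (α ⁻¹' Ioc (r / 2) r).encard ≤ M) ↔
      ∃ N : ℕ, ∀ k : ℕ, {n : ℕ | α k / 2 ≤ α n ∧ α n ≤ α k}.encard ≤ (N : ℕ∞) := by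
  constructor
  · rintro ⟨M, hM⟩
    refine ⟨2 * M, fun k => ?_⟩
    have hsplit : {n : ℕ | α k / 2 ≤ α n ∧ α n ≤ α k} ⊆
        α ⁻¹' Ioc (α k / 2 / 2) (α k / 2) ∪ α ⁻¹' Ioc (α k / 2) (α k) := by
      rintro n ⟨hlo, hhi⟩
      rcases hlo.eq_or_lt with heq | hlt
      · exact Or.inl ⟨by linarith [hpos k], heq.ge⟩
      · exact Or.inr ⟨hlt, hhi⟩
    calc _ ≤ _ := (encard_le_encard hsplit).trans (encard_union_le _ _)
      _ ≤ (M : ℕ∞) + M := add_le_add (hM _) (hM _)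
      _ = ((2 * M : ℕ) : ℕ∞) := by push_cast; ring
  · rintro ⟨N, hN⟩
    refine ⟨N, fun r => ?_⟩
    rcases (α ⁻¹' Ioc (r / 2) r).eq_empty_or_nonempty with hempty | hne
    · simp [hempty]
    set k := sInf (α ⁻¹' Ioc (r / 2) r)
    have hk : α k ∈ Ioc (r / 2) r := Nat.sInf_mem hne
    refine le_trans (encard_le_encard fun n hn => ?_) (hN k)
    exact ⟨by linarith [hk.2, hn.1], hanti (Nat.sInf_le hn)⟩

theorem statement_15 (α : ℕ → ℝ) (hα : IsShrinking α) :
    @IsDoubling (ℕ → Bool) (seqMetricSpace α hα) ↔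
      ∃ N : ℕ, ∀ k : ℕ, {n : ℕ | α k / 2 ≤ α n ∧ α n ≤ α k}.encard ≤ (N : ℕ∞) :=
  (isDoubling_seqMetricSpace_iff hα).trans (exists_encard_Ioc_half_le_iff hα.antitone hα.1)
end
end
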